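/- arXiv:1512.05728 — 3 statements merged into one kernel-verified Lean document; each statement's English description precedes it below -/
import Mathlib

section
/- Let (Ω,Σ) be a measurable space, X a real Banach space and m : Σ → X a σ-additive vector measure. Suppose {fₙ} ⊆ L¹(m) is a sequence and f : Ω → ℝ a measurable function such that (a) fₙ(x) → f(x) for ‖m‖-almost every x ∈ Ω, and (b) for each A ∈ Σ the sequence {∫_A fₙ dm} is convergent in X. Then f ∈ L¹(m) and fₙ → f in the norm of L¹(m). -/
/-!
The heart of the proof is that `(fₙ)` is Cauchy in `L¹(m)`, uniformly over `‖x*‖ ≤ 1`. If not,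
there are `nⱼ, kⱼ → ∞` and functionals `xⱼ` in the unit ball with
`∫ |f_{nⱼ} - f_{kⱼ}| d|xⱼm| > ε`. By the uniform boundedness principle all `|xⱼm|` have mass at
most some `C`, so `λ = ∑ 2⁻ʲ |xⱼm|` is a finite control measure. The set functions
`A ↦ xⱼ (∫_A (f_{nⱼ} - f_{kⱼ}) dm)` are `λ`-continuous and tend to `0` by (b), hence are uniformly
`λ`-continuous by the Vitali–Hahn–Saks theorem (Baire category on the measurable sets with the
pseudo-metric `λ (A ∆ B)`). Splitting along a Hahn set and the sign of the integrand, the same holds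
for `A ↦ ∫_A |f_{nⱼ} - f_{kⱼ}| d|xⱼm|`, and Egorov's theorem for `λ` then makes these integrals
tend to `0`: a contradiction. Fatou's lemma turns the Cauchy estimate into
`∫ |fₙ - f| d|x*m| → 0` uniformly in `x*`, which gives `f ∈ L¹(m)` with
`∫_A f dm = lim ∫_A fₙ dm` and `‖fₙ - f‖_{L¹(m)} → 0`.
-/

open MeasureTheory Filter Topology
open scoped ENNReal

noncomputable section

namespace Paper

variable {Ω : Type*} [MeasurableSpace Ω]
variable {X : Type*} [NormedAddCommGroup X] [NormedSpace ℝ X]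

/-- The signed measure `x* ∘ m` for a functional `x*` and vector measure `m`. -/
def dualApply (m : VectorMeasure Ω X) (x : X →L[ℝ] ℝ) : SignedMeasure Ω :=
  m.mapRange x.toLinearMap.toAddMonoidHom x.continuous

/-- The semivariation `‖m‖(A)` of a vector measure. -/
def semivar (m : VectorMeasure Ω X) (A : Set Ω) : ℝ≥0∞ :=
  ⨆ x : {x : X →L[ℝ] ℝ // ‖x‖ ≤ 1}, (dualApply m x.1).totalVariation A

/-- `P` holds `‖m‖`-almost everywhere. -/
def MAE (m : VectorMeasure Ω X) (P : Ω → Prop) : Prop :=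
  ∃ N : Set Ω, MeasurableSet N ∧ semivar m N = 0 ∧ ∀ ω ∉ N, P ω

/-- The integral `∫_A f ds` of a real function with respect to a signed measure. -/
def sIntegral (s : SignedMeasure Ω) (f : Ω → ℝ) (A : Set Ω) : ℝ :=
  (∫ ω in A, f ω ∂s.toJordanDecomposition.posPart) -
    ∫ ω in A, f ω ∂s.toJordanDecomposition.negPart

/-- `f` is integrable with respect to the vector measure `m` (Bartle-Dunford-Schwartz). -/
def MIntegrable (m : VectorMeasure Ω X) (f : Ω → ℝ) : Prop :=
  Measurable f ∧
  (∀ x : X →L[ℝ] ℝ, Integrable f ((dualApply m x).totalVariation)) ∧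
  (∀ A : Set Ω, MeasurableSet A →
    ∃ v : X, ∀ x : X →L[ℝ] ℝ, x v = sIntegral (dualApply m x) f A)

open Classical in
/-- The vector integral `∫_A f dm ∈ X`. -/
def mIntegral (m : VectorMeasure Ω X) (f : Ω → ℝ) (A : Set Ω) : X :=
  if h : ∃ v : X, ∀ x : X →L[ℝ] ℝ, x v = sIntegral (dualApply m x) f A then h.choose
  else 0

/-- The norm of `L¹(m)`: `‖f‖ = sup_{‖x*‖ ≤ 1} ∫ |f| d|x*m|`. -/
def mNorm (m : VectorMeasure Ω X) (f : Ω → ℝ) : ℝ :=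
  ⨆ x : {x : X →L[ℝ] ℝ // ‖x‖ ≤ 1}, ∫ ω, |f ω| ∂(dualApply m x.1).totalVariation

/-- The vector measure `m` is separable: the pseudometric space `(Σ, d_m)`,
`d_m(A,B) = ‖m‖(A △ B)`, is separable. -/
def SeparableVM (m : VectorMeasure Ω X) : Prop :=
  ∃ D : Set (Set Ω), D.Countable ∧ (∀ B ∈ D, MeasurableSet B) ∧
    ∀ A : Set Ω, MeasurableSet A → ∀ ε : ℝ, 0 < ε →
      ∃ B ∈ D, semivar m (symmDiff A B) < ENNReal.ofReal ε

section FunctionSpace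

variable {S : Type*} [MeasurableSpace S]

/-- `T` is a bounded linear functional on the function space determined by the
membership predicate `mem` and the norm `nrm`. -/
def IsBddLinFunctional (mem : (S → ℝ) → Prop) (nrm : (S → ℝ) → ℝ)
    (T : (S → ℝ) → ℝ) : Prop :=
  (∀ f g, mem f → mem g → T (f + g) = T f + T g) ∧
  (∀ (c : ℝ) (f), mem f → T (c • f) = c * T f) ∧
  (∃ C : ℝ, ∀ f, mem f → |T f| ≤ C * nrm f)

/-- `f` is a weakly null sequence in the function space `(mem, nrm)`. -/
def WeaklyNullSeq (mem : (S → ℝ) → Prop) (nrm : (S → ℝ) → ℝ) (f : ℕ → S → ℝ) : Prop :=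
  ∀ T : (S → ℝ) → ℝ, IsBddLinFunctional mem nrm T →
    Tendsto (fun n => T (f n)) atTop (nhds 0)

/-- The set `K` has uniformly absolutely continuous norm in the function space with
norm `nrm` over the measure `μ`. -/
def UnifACNorm (μ : Measure S) (nrm : (S → ℝ) → ℝ) (K : Set (S → ℝ)) : Prop :=
  ∀ ε : ℝ, 0 < ε → ∃ δ : ℝ, 0 < δ ∧ ∀ A : Set S, MeasurableSet A →
    μ A < ENNReal.ofReal δ → ∀ f ∈ K, nrm (A.indicator f) ≤ ε

/-- The subsequence splitting property for the function space `(mem, nrm)` over `μ`. -/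
def HasSSP (μ : Measure S) (mem : (S → ℝ) → Prop) (nrm : (S → ℝ) → ℝ) : Prop :=
  ∀ f : ℕ → S → ℝ, (∀ n, mem (f n)) → (∃ C : ℝ, ∀ n, nrm (f n) ≤ C) →
    ∃ σ : ℕ → ℕ, StrictMono σ ∧
      ∃ g h : ℕ → S → ℝ,
        (∀ n, mem (g n)) ∧ (∀ n, mem (h n)) ∧
        (∀ n, f (σ n) = g n + h n) ∧
        (∀ n, (fun s => g n s * h n s) =ᵐ[μ] 0) ∧
        UnifACNorm μ nrm (Set.range g) ∧
        (∀ i j, i ≠ j → (fun s => h i s * h j s) =ᵐ[μ] 0)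

/-- The weak Banach-Saks property for the function space `(mem, nrm)`. -/
def HasWBS (mem : (S → ℝ) → Prop) (nrm : (S → ℝ) → ℝ) : Prop :=
  ∀ f : ℕ → S → ℝ, (∀ n, mem (f n)) → WeaklyNullSeq mem nrm f →
    ∃ σ : ℕ → ℕ, StrictMono σ ∧
      Tendsto (fun n : ℕ => nrm ((n : ℝ)⁻¹ • ∑ k ∈ Finset.range n, f (σ k))) atTop (nhds 0)

end FunctionSpace

/-- A Banach function space over `(S, μ)`: an (abstract) normed space `X` together with
a linear embedding `J` into measurable functions on `S`, separating points modulo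
`μ`-null sets and satisfying the ideal property. -/
structure BFS (S : Type*) [MeasurableSpace S] (μ : Measure S)
    (X : Type*) [NormedAddCommGroup X] [NormedSpace ℝ X] where
  J : X →ₗ[ℝ] (S → ℝ)
  aemeasurable : ∀ x : X, AEMeasurable (J x) μ
  eq_zero : ∀ x : X, J x =ᵐ[μ] 0 → x = 0
  ideal : ∀ (x : X) (g : S → ℝ), AEMeasurable g μ →
    (∀ᵐ s ∂μ, |g s| ≤ |J x s|) → ∃ y : X, J y =ᵐ[μ] g ∧ ‖y‖ ≤ ‖x‖

variable {S : Type*} [MeasurableSpace S] {μ : Measure S}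

/-- The set `K ⊆ X` has uniformly absolutely continuous norm in the B.f.s. `X`. -/
def BFS.UnifAC (B : BFS S μ X) (K : Set X) : Prop :=
  ∀ ε : ℝ, 0 < ε → ∃ δ : ℝ, 0 < δ ∧ ∀ A : Set S, MeasurableSet A →
    μ A < ENNReal.ofReal δ → ∀ x ∈ K, ∀ y : X, B.J y =ᵐ[μ] A.indicator (B.J x) → ‖y‖ ≤ ε

/-- The B.f.s. `X` has absolutely continuous norm. -/
def BFS.ACNorm (B : BFS S μ X) : Prop :=
  ∀ x : X, ∀ ε : ℝ, 0 < ε → ∃ δ : ℝ, 0 < δ ∧ ∀ A : Set S, MeasurableSet A →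
    μ A < ENNReal.ofReal δ → ∀ y : X, B.J y =ᵐ[μ] A.indicator (B.J x) → ‖y‖ ≤ ε

/-- The subsequence splitting property for the B.f.s. `X`. -/
def BFS.SSP (B : BFS S μ X) : Prop :=
  ∀ f : ℕ → X, (∃ C : ℝ, ∀ n, ‖f n‖ ≤ C) →
    ∃ σ : ℕ → ℕ, StrictMono σ ∧
      ∃ g h : ℕ → X,
        (∀ n, f (σ n) = g n + h n) ∧
        (∀ n, (fun s => B.J (g n) s * B.J (h n) s) =ᵐ[μ] 0) ∧
        B.UnifAC (Set.range g) ∧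
        (∀ i j, i ≠ j → (fun s => B.J (h i) s * B.J (h j) s) =ᵐ[μ] 0)

/-- The weak Banach-Saks property for a normed space `Z`: every weakly null sequence has a
subsequence whose arithmetic means converge to zero in norm. -/
def WeakBanachSaks (Z : Type*) [NormedAddCommGroup Z] [NormedSpace ℝ Z] : Prop :=
  ∀ z : ℕ → Z, (∀ φ : Z →L[ℝ] ℝ, Tendsto (fun n => φ (z n)) atTop (nhds 0)) →
    ∃ σ : ℕ → ℕ, StrictMono σ ∧
      Tendsto (fun n : ℕ => ‖(n : ℝ)⁻¹ • ∑ k ∈ Finset.range n, z (σ k)‖) atTop (nhds 0)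

open Set
open scoped symmDiff NNReal

section SetSequences

variable {α : Type*}

lemma mem_iff_of_forall_notMem_symmDiff {u : ℕ → Set α} {ω : α} {n : ℕ}
    (h : ∀ j, ω ∉ u (n + j) ∆ u (n + j + 1)) (k : ℕ) : ω ∈ u (n + k) ↔ ω ∈ u n := by
  induction k with
  | zero => rfl
  | succ k ih =>
    have := h k
    rw [mem_symmDiff] at this
    rw [← add_assoc, ← ih]
    tauto

lemma symmDiff_limsup_subset (u : ℕ → Set α) (n : ℕ) :
    u n ∆ limsup u atTop ⊆ ⋃ j, u (n + j) ∆ u (n + j + 1) := by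
  intro ω hω
  by_contra hnot
  simp only [mem_iUnion, not_exists] at hnot
  have hlim : ω ∈ limsup u atTop ↔ ω ∈ u n := by
    rw [mem_limsup_iff_frequently_mem]
    have hev : ∀ᶠ k in atTop, ω ∈ u k ↔ ω ∈ u n :=
      eventually_atTop.2 ⟨n, fun k hk => by
        obtain ⟨j, rfl⟩ := Nat.exists_eq_add_of_le hk
        exact mem_iff_of_forall_notMem_symmDiff hnot j⟩
    exact ⟨fun h => (h.and_eventually hev).exists.elim fun k hk => hk.2.1 hk.1,
      fun h => (hev.mono fun k hk => hk.2 h).frequently⟩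
  rw [mem_symmDiff, hlim] at hω
  tauto

end SetSequences

section SetFunctions

variable {μ : Measure Ω}

def IsFinitelyAdditive (ρ : Set Ω → ℝ) : Prop :=
  ∀ A B, MeasurableSet A → MeasurableSet B → Disjoint A B → ρ (A ∪ B) = ρ A + ρ B

def AbsContinuous (μ : Measure Ω) (ρ : Set Ω → ℝ) : Prop :=
  ∀ ε : ℝ, 0 < ε → ∃ δ : ℝ≥0∞, 0 < δ ∧ ∀ A, MeasurableSet A → μ A < δ → |ρ A| ≤ ε

def UnifAbsContinuous {ι : Type*} (μ : Measure Ω) (ρ : ι → Set Ω → ℝ) : Prop :=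
  ∀ ε : ℝ, 0 < ε → ∃ δ : ℝ≥0∞, 0 < δ ∧ ∀ A, MeasurableSet A → μ A < δ → ∀ i, |ρ i A| ≤ ε

namespace IsFinitelyAdditive

variable {ρ : Set Ω → ℝ}

lemma sub (hρ : IsFinitelyAdditive ρ) {σ : Set Ω → ℝ} (hσ : IsFinitelyAdditive σ) :
    IsFinitelyAdditive (ρ - σ) := fun A B hA hB hAB => by
  simp only [Pi.sub_apply, hρ A B hA hB hAB, hσ A B hA hB hAB]; ring

lemma apply_eq_add_diff (hρ : IsFinitelyAdditive ρ) {A B : Set Ω} (hA : MeasurableSet A)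
    (hB : MeasurableSet B) : ρ A = ρ (A ∩ B) + ρ (A \ B) := by
  rw [← hρ _ _ (hA.inter hB) (hA.diff hB) disjoint_sdiff_inter.symm, inter_union_sdiff]

lemma apply_sub_apply (hρ : IsFinitelyAdditive ρ) {A B : Set Ω} (hA : MeasurableSet A)
    (hB : MeasurableSet B) : ρ A - ρ B = ρ (A \ B) - ρ (B \ A) := by
  rw [hρ.apply_eq_add_diff hA hB, hρ.apply_eq_add_diff hB hA, inter_comm]; ring

end IsFinitelyAdditive

/-- Measurable sets with the pseudo-distance `μ (A ∆ B)`; there is no need to identify sets up to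
null sets, since Baire's theorem holds in complete pseudo-emetric spaces. -/
structure MeasureAlgebra (μ : Measure Ω) where
  carrier : Set Ω
  measurableSet : MeasurableSet carrier

namespace MeasureAlgebra

instance : PseudoEMetricSpace (MeasureAlgebra μ) where
  edist A B := μ (A.carrier ∆ B.carrier)
  edist_self A := by simp
  edist_comm A B := by simp [symmDiff_comm]
  edist_triangle A B C := (measure_mono (symmDiff_triangle _ _ _)).trans (measure_union_le _ _)

instance : Nonempty (MeasureAlgebra μ) := ⟨⟨∅, .empty⟩⟩

lemma edist_def (A B : MeasureAlgebra μ) : edist A B = μ (A.carrier ∆ B.carrier) := rfl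

instance : CompleteSpace (MeasureAlgebra μ) := by
  refine EMetric.complete_of_convergent_controlled_sequences (fun n => 2⁻¹ ^ n)
    (fun n => ENNReal.pow_pos (by norm_num) n) fun u hu => ?_
  let L : MeasureAlgebra μ := ⟨limsup (fun n => (u n).carrier) atTop,
    MeasurableSet.measurableSet_limsup fun n => (u n).measurableSet⟩
  have hbound : ∀ n, edist (u n) L ≤ 2 * 2⁻¹ ^ n := fun n => calc
    edist (u n) L ≤ ∑' j, μ ((u (n + j)).carrier ∆ (u (n + j + 1)).carrier) :=
      (measure_mono (symmDiff_limsup_subset (fun k => (u k).carrier) n)).trans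
        (measure_iUnion_le _)
    _ ≤ ∑' j, 2⁻¹ ^ n * 2⁻¹ ^ j := ENNReal.tsum_le_tsum fun j => by
      rw [← pow_add]; exact (hu _ _ _ le_rfl (Nat.le_succ _)).le
    _ = 2 * 2⁻¹ ^ n := by
      rw [ENNReal.tsum_mul_left, ENNReal.tsum_geometric, ENNReal.one_sub_inv_two, inv_inv,
        mul_comm]
  refine ⟨L, tendsto_iff_edist_tendsto_0.2 <|
    tendsto_of_tendsto_of_tendsto_of_le_of_le tendsto_const_nhds ?_ (fun _ => zero_le) hbound⟩
  simpa using ENNReal.Tendsto.const_mul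
    (ENNReal.tendsto_pow_atTop_nhds_zero_of_lt_one (by norm_num : (2 : ℝ≥0∞)⁻¹ < 1))
    (Or.inr ENNReal.ofNat_ne_top)

end MeasureAlgebra

variable {ρ : Set Ω → ℝ}

lemma IsFinitelyAdditive.continuous_measureAlgebra (hadd : IsFinitelyAdditive ρ)
    (hac : AbsContinuous μ ρ) : Continuous fun A : MeasureAlgebra μ => ρ A.carrier := by
  refine continuous_iff_continuousAt.2 fun A₀ => ?_
  refine (Metric.nhds_basis_eball.tendsto_iff Metric.nhds_basis_closedBall).2 fun η hη => ?_
  obtain ⟨δ, hδ, hsmall⟩ := hac (η / 2) (half_pos hη)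
  refine ⟨δ, hδ, fun A hA => ?_⟩
  rw [Metric.mem_eball, MeasureAlgebra.edist_def] at hA
  have hsub : ∀ {B C : Set Ω}, MeasurableSet B → MeasurableSet C → μ (B ∆ C) < δ →
      |ρ (B \ C)| ≤ η / 2 := fun hB hC hBC =>
    hsmall _ (hB.diff hC) ((measure_mono fun _ hx => Or.inl hx).trans_lt hBC)
  rw [Metric.mem_closedBall, Real.dist_eq,
    hadd.apply_sub_apply A.measurableSet A₀.measurableSet]
  have h₁ := hsub A.measurableSet A₀.measurableSet hA
  have h₂ := hsub A₀.measurableSet A.measurableSet (by rwa [symmDiff_comm])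
  linarith [abs_sub (ρ (A.carrier \ A₀.carrier)) (ρ (A₀.carrier \ A.carrier))]

lemma IsFinitelyAdditive.abs_le_of_forall_symmDiff_lt (hadd : IsFinitelyAdditive ρ)
    {A₀ : Set Ω} (hA₀ : MeasurableSet A₀) {r : ℝ≥0∞} {c : ℝ}
    (hball : ∀ B, MeasurableSet B → μ (B ∆ A₀) < r → |ρ B| ≤ c)
    {A : Set Ω} (hA : MeasurableSet A) (hAr : μ A < r) : |ρ A| ≤ 2 * c := by
  have hunion : ρ (A₀ ∪ A) = ρ (A₀ \ A) + ρ A := by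
    rw [← hadd _ _ (hA₀.diff hA) hA disjoint_sdiff_left, sdiff_union_self]
  have h₁ := hball _ (hA₀.union hA) <| (measure_mono fun ω hω => by
    rcases hω with ⟨h, h'⟩ | ⟨h, h'⟩
    · exact h.resolve_left h'
    · exact absurd (Or.inl h) h').trans_lt hAr
  have h₂ := hball _ (hA₀.diff hA) <| (measure_mono fun ω hω => by
    rcases hω with ⟨h, h'⟩ | ⟨h, h'⟩
    · exact absurd h.1 h'
    · exact not_not.1 fun hωA => h' ⟨h, hωA⟩).trans_lt hAr
  rw [show ρ A = ρ (A₀ ∪ A) - ρ (A₀ \ A) by linarith]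
  linarith [abs_sub (ρ (A₀ ∪ A)) (ρ (A₀ \ A))]

lemma unifAbsContinuous_of_eventually {ρ : ℕ → Set Ω → ℝ} (hac : ∀ n, AbsContinuous μ (ρ n))
    (htail : ∀ ε : ℝ, 0 < ε → ∃ N, ∃ δ : ℝ≥0∞, 0 < δ ∧
      ∀ A, MeasurableSet A → μ A < δ → ∀ n, N ≤ n → |ρ n A| ≤ ε) :
    UnifAbsContinuous μ ρ := by
  intro ε hε
  obtain ⟨N, htail⟩ := htail ε hε
  suffices ∀ M, ∃ δ : ℝ≥0∞, 0 < δ ∧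
      ∀ A, MeasurableSet A → μ A < δ → ∀ n, N ≤ n + M → |ρ n A| ≤ ε by
    obtain ⟨δ, hδ, h⟩ := this N
    exact ⟨δ, hδ, fun A hA hμA n => h A hA hμA n (Nat.le_add_left N n)⟩
  intro M
  induction M with
  | zero => simpa using htail
  | succ M ih =>
    obtain ⟨δ₁, hδ₁, h₁⟩ := ih
    obtain ⟨δ₂, hδ₂, h₂⟩ := hac (N - (M + 1)) ε hε
    refine ⟨min δ₁ δ₂, lt_min hδ₁ hδ₂, fun A hA hμA n hn => ?_⟩
    by_cases hnM : N ≤ n + M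
    · exact h₁ A hA (hμA.trans_le (min_le_left _ _)) n hnM
    · obtain rfl : n = N - (M + 1) := by omega
      exact h₂ A hA (hμA.trans_le (min_le_right _ _))

theorem vitali_hahn_saks {ρ : ℕ → Set Ω → ℝ} (hadd : ∀ n, IsFinitelyAdditive (ρ n))
    (hac : ∀ n, AbsContinuous μ (ρ n)) (hcauchy : ∀ A, MeasurableSet A → CauchySeq fun n => ρ n A) :
    UnifAbsContinuous μ ρ := by
  refine unifAbsContinuous_of_eventually hac fun ε hε => ?_
  -- Baire category: some `E N` has interior in the complete space of measurable sets.
  let E : ℕ → Set (MeasureAlgebra μ) :=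
    fun N => {A | ∀ n, N ≤ n → |ρ n A.carrier - ρ N A.carrier| ≤ ε / 4}
  have hclosed : ∀ N, IsClosed (E N) := fun N => by
    simp only [E, ofPred_forall]
    exact isClosed_iInter fun n => isClosed_iInter fun _ => isClosed_le
      (((hadd n).continuous_measureAlgebra (hac n)).sub
        ((hadd N).continuous_measureAlgebra (hac N))).abs continuous_const
  have hcover : ⋃ N, E N = univ := eq_univ_of_forall fun A => by
    obtain ⟨N, hN⟩ := Metric.cauchySeq_iff'.1 (hcauchy A.carrier A.measurableSet) (ε / 4)
      (by positivity)
    exact mem_iUnion.2 ⟨N, fun n hn => (hN n hn).le⟩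
  obtain ⟨N, A₀, hA₀⟩ := nonempty_interior_of_iUnion_of_closed hclosed hcover
  obtain ⟨r, hr, hball⟩ := EMetric.mem_nhds_iff.1 (mem_interior_iff_mem_nhds.1 hA₀)
  obtain ⟨δ, hδ, hsmall⟩ := hac N (ε / 2) (half_pos hε)
  refine ⟨N, min r δ, lt_min hr hδ, fun A hA hμA n hn => ?_⟩
  have hdiff : |(ρ n - ρ N) A| ≤ 2 * (ε / 4) :=
    ((hadd n).sub (hadd N)).abs_le_of_forall_symmDiff_lt A₀.measurableSet
      (fun B hB hBr => hball (a := ⟨B, hB⟩) hBr n hn) hA (hμA.trans_le (min_le_left _ _))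
  have hN := hsmall A hA (hμA.trans_le (min_le_right _ _))
  rw [Pi.sub_apply] at hdiff
  linarith [abs_sub_abs_le_abs_sub (ρ n A) (ρ N A)]

lemma AbsContinuous.of_abs_le {σ : Set Ω → ℝ} (hσ : AbsContinuous μ σ)
    (hle : ∀ A, MeasurableSet A → |ρ A| ≤ σ A) : AbsContinuous μ ρ := fun ε hε => by
  obtain ⟨δ, hδ, h⟩ := hσ ε hε
  exact ⟨δ, hδ, fun A hA hμA => (hle A hA).trans ((le_abs_self _).trans (h A hA hμA))⟩

lemma AbsContinuous.of_measure_le_mul {ν : Measure Ω} (hρ : AbsContinuous ν ρ) {K : ℝ≥0∞}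
    (hK : K ≠ ∞) (hle : ∀ A, ν A ≤ K * μ A) : AbsContinuous μ ρ := fun ε hε => by
  obtain ⟨δ, hδ, h⟩ := hρ ε hε
  refine ⟨δ / K, ENNReal.div_pos hδ.ne' hK, fun A hA hμA => h A hA ?_⟩
  exact (hle A).trans_lt (by rw [mul_comm]; exact ENNReal.mul_lt_of_lt_div hμA)

lemma absContinuous_setIntegral_abs {g : Ω → ℝ} (hg : Integrable g μ) :
    AbsContinuous μ fun A => ∫ ω in A, |g ω| ∂μ := fun ε hε => by
  obtain ⟨δ, hδ, h⟩ := exists_pos_setLIntegral_lt_of_measure_lt hg.2.ne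
    (ENNReal.ofReal_pos.2 hε).ne'
  refine ⟨δ, hδ, fun A _ hμA => ?_⟩
  rw [abs_of_nonneg (integral_nonneg fun _ => abs_nonneg _)]
  simp_rw [← Real.norm_eq_abs]
  rw [integral_norm_eq_lintegral_enorm hg.1.restrict]
  exact ENNReal.toReal_le_of_le_ofReal hε.le (h A hμA).le

lemma setIntegral_abs_le_two_mul {ν : Measure Ω} {g : Ω → ℝ} (hg : Measurable g)
    (hgi : Integrable g ν) {A : Set Ω} (hA : MeasurableSet A) {c : ℝ}
    (hc : ∀ B, MeasurableSet B → B ⊆ A → |∫ ω in B, g ω ∂ν| ≤ c) :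
    ∫ ω in A, |g ω| ∂ν ≤ 2 * c := by
  have hS : MeasurableSet {ω | 0 ≤ g ω} := measurableSet_le measurable_const hg
  rw [← integral_inter_add_sdiff hS hgi.abs.integrableOn]
  have hpos : ∫ ω in A ∩ {ω | 0 ≤ g ω}, |g ω| ∂ν = ∫ ω in A ∩ {ω | 0 ≤ g ω}, g ω ∂ν :=
    setIntegral_congr_fun (hA.inter hS) fun ω hω => abs_of_nonneg hω.2
  have hneg : ∫ ω in A \ {ω | 0 ≤ g ω}, |g ω| ∂ν = -∫ ω in A \ {ω | 0 ≤ g ω}, g ω ∂ν := by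
    rw [← integral_neg]
    exact setIntegral_congr_fun (hA.diff hS) fun ω hω => abs_of_neg (not_le.1 hω.2)
  rw [hpos, hneg]
  linarith [le_abs_self (∫ ω in A ∩ {ω | 0 ≤ g ω}, g ω ∂ν),
    neg_le_abs (∫ ω in A \ {ω | 0 ≤ g ω}, g ω ∂ν),
    hc _ (hA.inter hS) inter_subset_left, hc _ (hA.diff hS) sdiff_subset]

lemma isFiniteMeasure_sum_geometric {ν : ℕ → Measure Ω} {C : ℝ≥0} (hC : ∀ j, ν j univ ≤ C) :
    IsFiniteMeasure (Measure.sum fun j => (2⁻¹ : ℝ≥0∞) ^ j • ν j) := by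
  constructor
  calc Measure.sum (fun j => (2⁻¹ : ℝ≥0∞) ^ j • ν j) univ
      ≤ ∑' j, (2⁻¹ : ℝ≥0∞) ^ j * C := by
        rw [Measure.sum_apply _ MeasurableSet.univ]
        exact ENNReal.tsum_le_tsum fun j => by
          rw [Measure.smul_apply, smul_eq_mul]; gcongr; exact hC j
    _ = 2 * C := by
        rw [ENNReal.tsum_mul_right, ENNReal.tsum_geometric, ENNReal.one_sub_inv_two, inv_inv]
    _ < ∞ := ENNReal.mul_lt_top ENNReal.ofNat_lt_top ENNReal.coe_lt_top

lemma le_two_pow_mul_sum_geometric (ν : ℕ → Measure Ω) (j : ℕ) (A : Set Ω) :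
    ν j A ≤ 2 ^ j * Measure.sum (fun j => (2⁻¹ : ℝ≥0∞) ^ j • ν j) A := calc
  ν j A = 2 ^ j * ((2⁻¹ : ℝ≥0∞) ^ j • ν j) A := by
    rw [Measure.smul_apply, smul_eq_mul, ← mul_assoc, ← mul_pow,
      ENNReal.mul_inv_cancel two_ne_zero ENNReal.ofNat_ne_top, one_pow, one_mul]
  _ ≤ _ := by gcongr; exact Measure.le_sum _ j

theorem tendsto_integral_abs_of_unifAbsContinuous [IsFiniteMeasure μ] {ν : ℕ → Measure Ω}
    {C : ℝ≥0} (hC : ∀ j, ν j univ ≤ C) {G : ℕ → Ω → ℝ} (hGm : ∀ j, Measurable (G j))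
    (hGi : ∀ j, Integrable (G j) (ν j)) (hlim : ∀ᵐ ω ∂μ, Tendsto (fun j => G j ω) atTop (𝓝 0))
    (hunif : UnifAbsContinuous μ fun j A => ∫ ω in A, |G j ω| ∂ν j) :
    Tendsto (fun j => ∫ ω, |G j ω| ∂ν j) atTop (𝓝 0) := by
  refine Metric.tendsto_atTop.2 fun ε hε => ?_
  obtain ⟨δ, hδ, hsmall⟩ := hunif (ε / 3) (by positivity)
  obtain ⟨r, -, hr, hrδ⟩ := ENNReal.lt_iff_exists_real_btwn.1 hδ
  -- Egorov: uniform convergence off a set `t` of `μ`-measure less than `δ`.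
  obtain ⟨t, ht, hμt, hconv⟩ := tendstoUniformlyOn_of_ae_tendsto'
    (fun j => (hGm j).stronglyMeasurable) stronglyMeasurable_const hlim (ENNReal.ofReal_pos.1 hr)
  obtain ⟨J, hJ⟩ := eventually_atTop.1 <|
    Metric.tendstoUniformlyOn_iff.1 hconv (ε / 3 / (C + 1)) (by positivity)
  refine ⟨J, fun j hj => ?_⟩
  have hin : ∫ ω in t, |G j ω| ∂ν j ≤ ε / 3 :=
    (le_abs_self _).trans (hsmall t ht (hμt.trans_lt hrδ) j)
  have hνt : ν j tᶜ ≤ C := (measure_mono (subset_univ _)).trans (hC j)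
  have hout : ∫ ω in tᶜ, |G j ω| ∂ν j ≤ C * (ε / 3 / (C + 1)) := calc
    ∫ ω in tᶜ, |G j ω| ∂ν j ≤ ∫ _ in tᶜ, ε / 3 / (C + 1) ∂ν j :=
      setIntegral_mono_on (hGi j).abs.integrableOn
        (integrableOn_const (ne_top_of_le_ne_top ENNReal.coe_ne_top hνt)) ht.compl
        fun ω hω => by simpa [abs_sub_comm] using (hJ j hj ω hω).le
    _ = (ν j).real tᶜ * (ε / 3 / (C + 1)) := by rw [setIntegral_const, smul_eq_mul]
    _ ≤ C * (ε / 3 / (C + 1)) := by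
      gcongr
      exact ENNReal.toReal_le_coe_of_le_coe hνt
  have hC' : C * (ε / 3 / (C + 1)) ≤ ε / 3 := by
    rw [mul_div_assoc']
    exact div_le_of_le_mul₀ (by positivity) (by positivity) (by nlinarith)
  rw [Real.dist_eq, sub_zero, abs_of_nonneg (integral_nonneg fun _ => abs_nonneg _),
    ← integral_add_compl ht (hGi j).abs]
  linarith

lemma integrable_and_integral_abs_le_of_tendsto_ae {ν : Measure Ω} {φ : ℕ → Ω → ℝ}
    {ψ : Ω → ℝ} (hφ : ∀ k, Integrable (φ k) ν)
    (hlim : ∀ᵐ ω ∂ν, Tendsto (fun k => φ k ω) atTop (𝓝 (ψ ω))) {c : ℝ}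
    (hc : ∀ᶠ k in atTop, ∫ ω, |φ k ω| ∂ν ≤ c) :
    Integrable ψ ν ∧ ∫ ω, |ψ ω| ∂ν ≤ c := by
  have hψ := aestronglyMeasurable_of_tendsto_ae atTop (fun k => (hφ k).1) hlim
  have hc₀ : 0 ≤ c := by
    obtain ⟨k, hk⟩ := hc.exists
    exact (integral_nonneg fun _ => abs_nonneg _).trans hk
  have hnorm : eLpNorm ψ 1 ν ≤ ENNReal.ofReal c := by
    refine (Lp.eLpNorm_lim_le_liminf_eLpNorm (fun k => (hφ k).1) ψ hlim).trans <|
      liminf_le_of_frequently_le' (hc.mono fun k hk => ?_).frequently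
    rw [eLpNorm_one_eq_lintegral_enorm, ← ofReal_integral_norm_eq_lintegral_enorm (hφ k)]
    simpa only [Real.norm_eq_abs] using ENNReal.ofReal_le_ofReal hk
  refine ⟨memLp_one_iff_integrable.1 ⟨hψ, hnorm.trans_lt ENNReal.ofReal_lt_top⟩, ?_⟩
  simp_rw [← Real.norm_eq_abs]
  rw [integral_norm_eq_lintegral_enorm hψ, ← eLpNorm_one_eq_lintegral_enorm]
  exact ENNReal.toReal_le_of_le_ofReal hc₀ hnorm

end SetFunctions

section SignedMeasure

variable {s : SignedMeasure Ω} {g h : Ω → ℝ}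

lemma totalVariation_smul_of_nonneg (s : SignedMeasure Ω) {c : ℝ} (hc : 0 ≤ c) :
    (c • s).totalVariation = c.toNNReal • s.totalVariation := by
  rw [SignedMeasure.totalVariation, SignedMeasure.toJordanDecomposition_smul_real,
    JordanDecomposition.real_smul_nonneg _ _ hc, JordanDecomposition.smul_posPart,
    JordanDecomposition.smul_negPart]
  exact (smul_add _ _ _).symm

lemma sIntegral_sub (hg : Integrable g s.totalVariation) (hh : Integrable h s.totalVariation)
    (A : Set Ω) : sIntegral s (fun ω => g ω - h ω) A = sIntegral s g A - sIntegral s h A := by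
  obtain ⟨hgp, hgn⟩ := integrable_add_measure.1 hg
  obtain ⟨hhp, hhn⟩ := integrable_add_measure.1 hh
  rw [sIntegral, sIntegral, sIntegral, integral_sub hgp.integrableOn hhp.integrableOn,
    integral_sub hgn.integrableOn hhn.integrableOn]
  ring

lemma isFinitelyAdditive_sIntegral (hg : Integrable g s.totalVariation) :
    IsFinitelyAdditive (sIntegral s g) := fun A B _ hB hAB => by
  obtain ⟨hgp, hgn⟩ := integrable_add_measure.1 hg
  rw [sIntegral, sIntegral, sIntegral, setIntegral_union hAB hB hgp.integrableOn hgp.integrableOn,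
    setIntegral_union hAB hB hgn.integrableOn hgn.integrableOn]
  ring

lemma abs_sIntegral_le (hg : Integrable g s.totalVariation) (A : Set Ω) :
    |sIntegral s g A| ≤ ∫ ω in A, |g ω| ∂s.totalVariation := by
  obtain ⟨hgp, hgn⟩ := integrable_add_measure.1 hg
  rw [SignedMeasure.totalVariation, Measure.restrict_add,
    integral_add_measure hgp.abs.integrableOn hgn.abs.integrableOn, sIntegral]
  refine (abs_sub _ _).trans (add_le_add ?_ ?_) <;>
    simpa only [Real.norm_eq_abs] using norm_integral_le_integral_norm g

lemma setIntegral_abs_totalVariation_le (hg : Measurable g) (hgi : Integrable g s.totalVariation)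
    {A : Set Ω} (hA : MeasurableSet A) {c : ℝ}
    (hc : ∀ B, MeasurableSet B → B ⊆ A → |sIntegral s g B| ≤ c) :
    ∫ ω in A, |g ω| ∂s.totalVariation ≤ 4 * c := by
  obtain ⟨hgp, hgn⟩ := integrable_add_measure.1 hgi
  set pos := s.toJordanDecomposition.posPart
  set neg := s.toJordanDecomposition.negPart
  -- On a Hahn set `u`, `sIntegral s g` is minus the `neg`-integral; off `u`, the `pos`-integral.
  obtain ⟨u, hu, hpos_u, hneg_u⟩ := s.toJordanDecomposition.mutuallySingular
  have hoff : ∫ ω in A \ u, |g ω| ∂pos ≤ 2 * c :=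
    setIntegral_abs_le_two_mul hg hgp (hA.diff hu) fun B hB hBA => by
      have hneg : ∫ ω in B, g ω ∂neg = 0 :=
        setIntegral_measure_zero _ (measure_mono_null (hBA.trans fun _ hω => hω.2) hneg_u)
      simpa [sIntegral, pos, neg, hneg] using hc B hB (hBA.trans sdiff_subset)
  have hon : ∫ ω in A ∩ u, |g ω| ∂neg ≤ 2 * c :=
    setIntegral_abs_le_two_mul hg hgn (hA.inter hu) fun B hB hBA => by
      have hpos : ∫ ω in B, g ω ∂pos = 0 :=
        setIntegral_measure_zero _ (measure_mono_null (hBA.trans inter_subset_right) hpos_u)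
      simpa [sIntegral, pos, neg, hpos] using hc B hB (hBA.trans inter_subset_left)
  have hpos := integral_inter_add_sdiff hu (hgp.abs.integrableOn (s := A))
  have hneg := integral_inter_add_sdiff hu (hgn.abs.integrableOn (s := A))
  rw [setIntegral_measure_zero _ (measure_mono_null inter_subset_right hpos_u)] at hpos
  rw [setIntegral_measure_zero (s := A \ u) _ (measure_mono_null (fun _ hω => hω.2) hneg_u),
    add_zero] at hneg
  rw [SignedMeasure.totalVariation, Measure.restrict_add,
    integral_add_measure hgp.abs.integrableOn hgn.abs.integrableOn]
  linarith

lemma unifAbsContinuous_setIntegral_abs {ι : Type*} {μ : Measure Ω} {s : ι → SignedMeasure Ω}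
    {g : ι → Ω → ℝ} (hgm : ∀ i, Measurable (g i))
    (hgi : ∀ i, Integrable (g i) (s i).totalVariation)
    (h : UnifAbsContinuous μ fun i => sIntegral (s i) (g i)) :
    UnifAbsContinuous μ fun i A => ∫ ω in A, |g i ω| ∂(s i).totalVariation := fun ε hε => by
  obtain ⟨δ, hδ, hsmall⟩ := h (ε / 4) (by positivity)
  refine ⟨δ, hδ, fun A hA hμA i => ?_⟩
  rw [abs_of_nonneg (integral_nonneg fun _ => abs_nonneg _)]
  have := setIntegral_abs_totalVariation_le (hgm i) (hgi i) hA fun B hB hBA =>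
    hsmall B hB ((measure_mono hBA).trans_lt hμA) i
  linarith

end SignedMeasure

lemma dualApply_apply (m : VectorMeasure Ω X) (x : X →L[ℝ] ℝ) (A : Set Ω) :
    dualApply m x A = x (m A) :=
  VectorMeasure.mapRange_apply _ x.continuous

lemma dualApply_smul (m : VectorMeasure Ω X) (c : ℝ) (x : X →L[ℝ] ℝ) :
    dualApply m (c • x) = c • dualApply m x :=
  VectorMeasure.ext fun A _ => by simp [dualApply_apply]

lemma norm_inv_norm_smul_le_one (x : X →L[ℝ] ℝ) : ‖‖x‖⁻¹ • x‖ ≤ 1 := by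
  rw [norm_smul, norm_inv, norm_norm]
  exact inv_mul_le_one_of_le₀ le_rfl (norm_nonneg _)

lemma totalVariation_dualApply (m : VectorMeasure Ω X) (x : X →L[ℝ] ℝ) :
    (dualApply m x).totalVariation
      = ‖x‖.toNNReal • (dualApply m (‖x‖⁻¹ • x)).totalVariation := by
  rw [← totalVariation_smul_of_nonneg _ (norm_nonneg x), ← dualApply_smul]
  rcases eq_or_ne x 0 with rfl | hx
  · simp
  · rw [smul_inv_smul₀ (norm_ne_zero_iff.2 hx)]

section VectorMeasure

variable {m : VectorMeasure Ω X}

lemma integrable_totalVariation_dualApply {g : Ω → ℝ}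
    (hg : ∀ x : X →L[ℝ] ℝ, ‖x‖ ≤ 1 → Integrable g (dualApply m x).totalVariation)
    (x : X →L[ℝ] ℝ) : Integrable g (dualApply m x).totalVariation := by
  rw [totalVariation_dualApply]
  exact (hg _ (norm_inv_norm_smul_le_one x)).smul_measure ENNReal.coe_ne_top

lemma integral_totalVariation_dualApply_le {g : Ω → ℝ} {c : ℝ}
    (hg : ∀ x : X →L[ℝ] ℝ, ‖x‖ ≤ 1 → ∫ ω, g ω ∂(dualApply m x).totalVariation ≤ c)
    (x : X →L[ℝ] ℝ) : ∫ ω, g ω ∂(dualApply m x).totalVariation ≤ ‖x‖ * c := by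
  rw [totalVariation_dualApply, integral_smul_nnreal_measure, NNReal.smul_def, smul_eq_mul,
    Real.coe_toNNReal _ (norm_nonneg x)]
  exact mul_le_mul_of_nonneg_left (hg _ (norm_inv_norm_smul_le_one x)) (norm_nonneg x)

lemma totalVariation_dualApply_eq_zero {N : Set Ω} (hN : semivar m N = 0) (x : X →L[ℝ] ℝ) :
    (dualApply m x).totalVariation N = 0 := by
  rw [semivar, ENNReal.iSup_eq_zero] at hN
  rw [totalVariation_dualApply, Measure.smul_apply, hN ⟨_, norm_inv_norm_smul_le_one x⟩, smul_zero]

lemma MAE.ae_totalVariation {P : Ω → Prop} (h : MAE m P) (x : X →L[ℝ] ℝ) :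
    ∀ᵐ ω ∂(dualApply m x).totalVariation, P ω := by
  obtain ⟨N, -, hN, hP⟩ := h
  exact measure_mono_null (fun ω hω => by_contra fun hωN => hω (hP ω hωN))
    (totalVariation_dualApply_eq_zero hN x)

lemma apply_mIntegral {g : Ω → ℝ} (hg : MIntegrable m g) {A : Set Ω} (hA : MeasurableSet A)
    (x : X →L[ℝ] ℝ) : x (mIntegral m g A) = sIntegral (dualApply m x) g A := by
  rw [mIntegral, dif_pos (hg.2.2 A hA)]
  exact (hg.2.2 A hA).choose_spec x

lemma mIntegrable_one : MIntegrable m fun _ => (1 : ℝ) := by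
  refine ⟨measurable_const, fun x => integrable_const 1, fun A hA => ⟨m A, fun x => ?_⟩⟩
  rw [← dualApply_apply, sIntegral, setIntegral_const, setIntegral_const, smul_eq_mul,
    smul_eq_mul, mul_one, mul_one, ← Measure.toSignedMeasure_sub_apply hA,
    ← JordanDecomposition.toSignedMeasure, SignedMeasure.toSignedMeasure_toJordanDecomposition]

lemma MIntegrable.exists_abs_sIntegral_le {g : Ω → ℝ} (hg : MIntegrable m g) :
    ∃ C, ∀ x : X →L[ℝ] ℝ, ‖x‖ ≤ 1 → ∀ B, MeasurableSet B →
      |sIntegral (dualApply m x) g B| ≤ C := by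
  let T : {B : Set Ω // MeasurableSet B} → StrongDual ℝ (StrongDual ℝ X) :=
    fun B => NormedSpace.inclusionInDoubleDual ℝ X (mIntegral m g B)
  have hT : ∀ B x, T B x = sIntegral (dualApply m x) g B.1 := fun B x =>
    apply_mIntegral hg B.2 x
  -- Banach–Steinhaus for the weakly bounded family `∫_B g dm`
  obtain ⟨C, hC⟩ := banach_steinhaus (g := T) fun x =>
    ⟨∫ ω, |g ω| ∂(dualApply m x).totalVariation, fun B => by
      rw [hT, Real.norm_eq_abs]
      exact (abs_sIntegral_le (hg.2.1 x) _).trans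
        (setIntegral_le_integral (hg.2.1 x).abs (.of_forall fun _ => abs_nonneg _))⟩
  refine ⟨C, fun x hx B hB => ?_⟩
  calc |sIntegral (dualApply m x) g B| = ‖T ⟨B, hB⟩ x‖ := by rw [hT, Real.norm_eq_abs]
    _ ≤ ‖T ⟨B, hB⟩‖ * ‖x‖ := (T ⟨B, hB⟩).le_opNorm x
    _ ≤ C * 1 := mul_le_mul (hC _) hx (norm_nonneg x) ((norm_nonneg _).trans (hC ⟨B, hB⟩))
    _ = C := mul_one C

lemma MIntegrable.exists_integral_abs_le {g : Ω → ℝ} (hg : MIntegrable m g) :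
    ∃ C, ∀ x : X →L[ℝ] ℝ, ‖x‖ ≤ 1 → ∫ ω, |g ω| ∂(dualApply m x).totalVariation ≤ C := by
  obtain ⟨C, hC⟩ := hg.exists_abs_sIntegral_le
  refine ⟨4 * C, fun x hx => ?_⟩
  rw [← setIntegral_univ]
  exact setIntegral_abs_totalVariation_le hg.1 (hg.2.1 x) .univ fun B hB _ => hC x hx B hB

lemma exists_totalVariation_le (m : VectorMeasure Ω X) :
    ∃ C : ℝ≥0, ∀ x : X →L[ℝ] ℝ, ‖x‖ ≤ 1 → (dualApply m x).totalVariation univ ≤ C := by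
  obtain ⟨C, hC⟩ := (mIntegrable_one (m := m)).exists_integral_abs_le
  refine ⟨C.toNNReal, fun x hx => ?_⟩
  have h := hC x hx
  rw [abs_one, integral_const, smul_eq_mul, mul_one] at h
  rw [← ofReal_measureReal, ENNReal.ofNNReal_toNNReal]
  exact ENNReal.ofReal_le_ofReal h

lemma mNorm_nonneg (m : VectorMeasure Ω X) (g : Ω → ℝ) : 0 ≤ mNorm m g :=
  Real.iSup_nonneg fun _ => integral_nonneg fun _ => abs_nonneg _

lemma mNorm_le {g : Ω → ℝ} {c : ℝ}
    (hc : ∀ x : X →L[ℝ] ℝ, ‖x‖ ≤ 1 → ∫ ω, |g ω| ∂(dualApply m x).totalVariation ≤ c) :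
    mNorm m g ≤ c :=
  have : Nonempty {x : X →L[ℝ] ℝ // ‖x‖ ≤ 1} := ⟨⟨0, norm_zero.le.trans zero_le_one⟩⟩
  ciSup_le fun x => hc x.1 x.2

section Convergence

variable {F : ℕ → Ω → ℝ} {f : Ω → ℝ}

/-- Convergence in `L¹(m)`, stated without `mNorm`, whose `⨆` is junk for unbounded families. -/
def TendstoL1 (m : VectorMeasure Ω X) (F : ℕ → Ω → ℝ) (f : Ω → ℝ) : Prop :=
  ∀ ε : ℝ, 0 < ε → ∃ N, ∀ n, N ≤ n → ∀ x : X →L[ℝ] ℝ, ‖x‖ ≤ 1 →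
    Integrable (fun ω => F n ω - f ω) (dualApply m x).totalVariation ∧
      ∫ ω, |F n ω - f ω| ∂(dualApply m x).totalVariation ≤ ε

namespace TendstoL1

lemma integrable (h : TendstoL1 m F f)
    (hF : ∀ n (x : X →L[ℝ] ℝ), Integrable (F n) (dualApply m x).totalVariation)
    (x : X →L[ℝ] ℝ) : Integrable f (dualApply m x).totalVariation := by
  obtain ⟨N, hN⟩ := h 1 one_pos
  refine integrable_totalVariation_dualApply (fun y hy => ?_) x
  exact ((hF N y).sub (hN N le_rfl y hy).1).congr (.of_forall fun ω => sub_sub_cancel _ _)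

lemma tendsto_sIntegral (h : TendstoL1 m F f)
    (hF : ∀ n (x : X →L[ℝ] ℝ), Integrable (F n) (dualApply m x).totalVariation)
    (hf : ∀ x : X →L[ℝ] ℝ, Integrable f (dualApply m x).totalVariation)
    (A : Set Ω) (x : X →L[ℝ] ℝ) :
    Tendsto (fun n => sIntegral (dualApply m x) (F n) A) atTop
      (𝓝 (sIntegral (dualApply m x) f A)) := by
  refine Metric.tendsto_atTop.2 fun ε hε => ?_
  obtain ⟨N, hN⟩ := h (ε / (‖x‖ + 1)) (by positivity)
  refine ⟨N, fun n hn => ?_⟩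
  have hint := (hF n x).sub (hf x)
  rw [Real.dist_eq, ← sIntegral_sub (hF n x) (hf x)]
  calc |sIntegral (dualApply m x) (fun ω => F n ω - f ω) A|
      ≤ ∫ ω in A, |F n ω - f ω| ∂(dualApply m x).totalVariation := abs_sIntegral_le hint A
    _ ≤ ∫ ω, |F n ω - f ω| ∂(dualApply m x).totalVariation :=
      setIntegral_le_integral hint.abs (.of_forall fun _ => abs_nonneg _)
    _ ≤ ‖x‖ * (ε / (‖x‖ + 1)) :=
      integral_totalVariation_dualApply_le (fun y hy => (hN n hn y hy).2) x
    _ < ε := by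
      rw [mul_div_assoc', div_lt_iff₀ (by positivity)]
      nlinarith [norm_nonneg x]

lemma tendsto_mNorm (h : TendstoL1 m F f) :
    Tendsto (fun n => mNorm m fun ω => F n ω - f ω) atTop (𝓝 0) := by
  refine Metric.tendsto_atTop.2 fun ε hε => ?_
  obtain ⟨N, hN⟩ := h (ε / 2) (half_pos hε)
  refine ⟨N, fun n hn => ?_⟩
  rw [Real.dist_eq, sub_zero, abs_of_nonneg (mNorm_nonneg _ _)]
  exact (mNorm_le fun x hx => (hN n hn x hx).2).trans_lt (half_lt_self hε)

end TendstoL1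

theorem tendsto_integral_abs_sub_comp (hF : ∀ n, MIntegrable m (F n))
    (hae : MAE m fun ω => Tendsto (fun n => F n ω) atTop (𝓝 (f ω)))
    (hconv : ∀ A, MeasurableSet A → ∃ L : X, Tendsto (fun n => mIntegral m (F n) A) atTop (𝓝 L))
    {n k : ℕ → ℕ} (hn : Tendsto n atTop atTop)
    (hk : Tendsto k atTop atTop) {x : ℕ → X →L[ℝ] ℝ} (hx : ∀ j, ‖x j‖ ≤ 1) :
    Tendsto (fun j => ∫ ω, |F (n j) ω - F (k j) ω| ∂(dualApply m (x j)).totalVariation)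
      atTop (𝓝 0) := by
  set G : ℕ → Ω → ℝ := fun j ω => F (n j) ω - F (k j) ω
  set ν : ℕ → Measure Ω := fun j => (dualApply m (x j)).totalVariation
  have hGm : ∀ j, Measurable (G j) := fun j => (hF _).1.sub (hF _).1
  have hGi : ∀ j, Integrable (G j) (ν j) := fun j => ((hF _).2.1 _).sub ((hF _).2.1 _)
  obtain ⟨C, hC⟩ := exists_totalVariation_le m
  -- One finite measure `μ` with `ν j ≤ 2 ^ j • μ` controls all the `ν j`.
  let μ : Measure Ω := Measure.sum fun j => (2⁻¹ : ℝ≥0∞) ^ j • ν j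
  have : IsFiniteMeasure μ := isFiniteMeasure_sum_geometric fun j => hC _ (hx j)
  have hlim : ∀ᵐ ω ∂μ, Tendsto (fun j => G j ω) atTop (𝓝 0) :=
    Measure.ae_sum_iff.2 fun j => Measure.ae_smul_measure (by
      filter_upwards [hae.ae_totalVariation (x j)] with ω hω
      simpa using (hω.comp hn).sub (hω.comp hk)) _
  have hρ : UnifAbsContinuous μ fun j => sIntegral (dualApply m (x j)) (G j) := by
    refine vitali_hahn_saks (fun j => isFinitelyAdditive_sIntegral (hGi j)) (fun j => ?_)
      fun A hA => ?_
    · exact ((absContinuous_setIntegral_abs (hGi j)).of_abs_le fun A _ =>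
        abs_sIntegral_le (hGi j) A).of_measure_le_mul (ENNReal.pow_ne_top ENNReal.ofNat_ne_top)
        (le_two_pow_mul_sum_geometric ν j)
    · obtain ⟨L, hL⟩ := hconv A hA
      have hdist := (cauchySeq_iff_tendsto_dist_atTop_0.1 hL.cauchySeq).comp
        ((hn.prodMk hk).mono_right prod_atTop_atTop_eq.le)
      refine (squeeze_zero_norm (fun j => ?_) hdist).cauchySeq
      rw [sIntegral_sub ((hF _).2.1 _) ((hF _).2.1 _), ← apply_mIntegral (hF _) hA,
        ← apply_mIntegral (hF _) hA, ← map_sub, Function.comp_apply, dist_eq_norm]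
      exact ((x j).le_opNorm _).trans (mul_le_of_le_one_left (norm_nonneg _) (hx j))
  exact tendsto_integral_abs_of_unifAbsContinuous (fun j => hC _ (hx j)) hGm hGi hlim
    (unifAbsContinuous_setIntegral_abs hGm hGi hρ)

theorem exists_forall_integral_abs_sub_le (hF : ∀ n, MIntegrable m (F n))
    (hae : MAE m fun ω => Tendsto (fun n => F n ω) atTop (𝓝 (f ω)))
    (hconv : ∀ A, MeasurableSet A → ∃ L : X, Tendsto (fun n => mIntegral m (F n) A) atTop (𝓝 L))
    {ε : ℝ} (hε : 0 < ε) :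
    ∃ N, ∀ n k, N ≤ n → N ≤ k → ∀ x : X →L[ℝ] ℝ, ‖x‖ ≤ 1 →
      ∫ ω, |F n ω - F k ω| ∂(dualApply m x).totalVariation ≤ ε := by
  by_contra! h
  choose n k hn hk x hx hgt using h
  obtain ⟨j, hj⟩ := ((tendsto_integral_abs_sub_comp hF hae hconv (tendsto_atTop_mono hn tendsto_id)
    (tendsto_atTop_mono hk tendsto_id) hx).eventually (gt_mem_nhds hε)).exists
  exact (hgt j).not_gt hj

theorem tendstoL1_of_tendsto_mIntegral (hF : ∀ n, MIntegrable m (F n))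
    (hae : MAE m fun ω => Tendsto (fun n => F n ω) atTop (𝓝 (f ω)))
    (hconv : ∀ A, MeasurableSet A → ∃ L : X, Tendsto (fun n => mIntegral m (F n) A) atTop (𝓝 L)) :
    TendstoL1 m F f := fun ε hε => by
  obtain ⟨N, hN⟩ := exists_forall_integral_abs_sub_le hF hae hconv hε
  refine ⟨N, fun n hn x hx => integrable_and_integral_abs_le_of_tendsto_ae
    (φ := fun k ω => F n ω - F k ω) (fun k => ((hF n).2.1 x).sub ((hF k).2.1 x)) ?_
    (eventually_atTop.2 ⟨N, fun k hk => hN n k hn hk x hx⟩)⟩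
  filter_upwards [hae.ae_totalVariation x] with ω hω using tendsto_const_nhds.sub hω

end Convergence

end VectorMeasure

theorem statement0_general
    {Ω : Type*} [MeasurableSpace Ω]
    {X : Type*} [NormedAddCommGroup X] [NormedSpace ℝ X]
    (m : VectorMeasure Ω X)
    (f : Ω → ℝ) (hf : Measurable f)
    (F : ℕ → Ω → ℝ) (hF : ∀ n, MIntegrable m (F n))
    (hae : MAE m (fun ω => Tendsto (fun n => F n ω) atTop (nhds (f ω))))
    (hconv : ∀ A : Set Ω, MeasurableSet A →
      ∃ L : X, Tendsto (fun n => mIntegral m (F n) A) atTop (nhds L)) :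
    MIntegrable m f ∧
      Tendsto (fun n => mNorm m (fun ω => F n ω - f ω)) atTop (nhds 0) := by
  have hL1 := tendstoL1_of_tendsto_mIntegral hF hae hconv
  have hFi : ∀ n x, Integrable (F n) (dualApply m x).totalVariation := fun n => (hF n).2.1
  have hfi := hL1.integrable hFi
  refine ⟨⟨hf, hfi, fun A hA => ?_⟩, hL1.tendsto_mNorm⟩
  obtain ⟨L, hL⟩ := hconv A hA
  refine ⟨L, fun x => tendsto_nhds_unique ?_ (hL1.tendsto_sIntegral hFi hfi A x)⟩
  simpa only [Function.comp_def, apply_mIntegral (hF _) hA] using (x.continuous.tendsto L).comp hL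

/-- if `fₙ → f` pointwise `‖m‖`-a.e. and `∫_A fₙ dm` converges in `X` for every
measurable `A`, then `f ∈ L¹(m)` and `fₙ → f` in the norm of `L¹(m)`. -/
theorem statement0
    {Ω : Type*} [MeasurableSpace Ω]
    {X : Type*} [NormedAddCommGroup X] [NormedSpace ℝ X] [CompleteSpace X]
    (m : VectorMeasure Ω X)
    (f : Ω → ℝ) (hf : Measurable f)
    (F : ℕ → Ω → ℝ) (hF : ∀ n, MIntegrable m (F n))
    (hae : MAE m (fun ω => Tendsto (fun n => F n ω) atTop (nhds (f ω))))
    (hconv : ∀ A : Set Ω, MeasurableSet A →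
      ∃ L : X, Tendsto (fun n => mIntegral m (F n) A) atTop (nhds L)) :
    MIntegrable m f ∧
      Tendsto (fun n => mNorm m (fun ω => F n ω - f ω)) atTop (nhds 0) :=
  statement0_general m f hf F hF hae hconv

end Paper
end
end

section
/- Let (Ω,Σ,η) be a finite measure space. If {ξₙ} ⊆ L¹(η) converges to 0 weakly in L¹(η) and ξₙ(x) → g₀(x) for η-almost every x, then g₀ = 0 η-a.e. and ξₙ → 0 in the norm of L¹(η). -/
/-!
Testing the weak convergence against indicators gives `∫_A ξₙ → 0` for every measurable `A`.
By Baire category in the complete metric space of indicator functions of `L¹(η)` (the measure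
algebra of `η`), convergence of `∫_A ξₙ` for every `A` forces uniform absolute continuity
(Vitali–Hahn–Saks), so `(ξₙ)` is uniformly integrable. By Egorov, `ξₙ → g₀` uniformly off a set of
small measure; where moreover `g₀ ≥ c > 0`, eventually `∫_A ξₙ ≥ c η(A) / 2`, so that set is null
and `g₀ = 0` a.e. Vitali's convergence theorem then gives `‖ξₙ‖₁ → 0`.
-/

open MeasureTheory Filter Topology
open scoped ENNReal

noncomputable section

namespace Paper

variable {Ω : Type*} [MeasurableSpace Ω]
variable {X : Type*} [NormedAddCommGroup X] [NormedSpace ℝ X]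

variable {S : Type*} [MeasurableSpace S] {μ : Measure S}

open scoped symmDiff

lemma exists_isOpen_forall_dist_le_of_cauchySeq {Y E : Type*} [TopologicalSpace Y] [BaireSpace Y]
    [Nonempty Y] [PseudoMetricSpace E] {φ : ℕ → Y → E} (hφ : ∀ n, Continuous (φ n))
    (hφc : ∀ y, CauchySeq fun n => φ n y) {e : ℝ} (he : 0 < e) :
    ∃ N, ∃ U : Set Y, IsOpen U ∧ U.Nonempty ∧ ∀ y ∈ U, ∀ n ≥ N, dist (φ n y) (φ N y) ≤ e := by
  set F : ℕ → Set Y := fun N => ⋂ n ≥ N, {y | dist (φ n y) (φ N y) ≤ e}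
  have hF : ∀ N, IsClosed (F N) := fun N =>
    isClosed_biInter fun n _ => isClosed_le ((hφ n).dist (hφ N)) continuous_const
  have hcover : ⋃ N, F N = Set.univ := by
    refine Set.eq_univ_of_forall fun y => Set.mem_iUnion.2 ?_
    obtain ⟨N, hN⟩ := Metric.cauchySeq_iff'.1 (hφc y) e he
    exact ⟨N, Set.mem_iInter₂.2 fun n hn => (hN n hn).le⟩
  obtain ⟨N, hN⟩ := nonempty_interior_of_iUnion_of_closed hF hcover
  refine ⟨N, interior (F N), isOpen_interior, hN, fun y hy => ?_⟩
  simpa only [F, Set.mem_iInter, Set.mem_ofPred_eq] using interior_subset hy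

lemma Lp.isClosed_setOf_ae_mem {α E : Type*} [MeasurableSpace α] {μ : Measure α}
    [NormedAddCommGroup E] {p : ℝ≥0∞} [Fact (1 ≤ p)] {C : Set E} (hC : IsClosed C) :
    IsClosed {f : Lp E p μ | ∀ᵐ x ∂μ, f x ∈ C} := by
  refine IsSeqClosed.isClosed fun f g hf hfg => ?_
  obtain ⟨ns, -, hns⟩ := (tendstoInMeasure_of_tendsto_Lp hfg).exists_seq_tendsto_ae
  filter_upwards [hns, ae_all_iff.2 fun k => hf (ns k)] with x hx hxC
  exact hC.mem_of_tendsto hx (Eventually.of_forall hxC)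

lemma eLpNorm_one_eq_ofReal_integral_abs {α : Type*} [MeasurableSpace α] {μ : Measure α}
    {f : α → ℝ} (hf : Integrable f μ) : eLpNorm f 1 μ = ENNReal.ofReal (∫ x, |f x| ∂μ) := by
  simp only [eLpNorm_one_eq_lintegral_enorm, ← ofReal_integral_norm_eq_lintegral_enorm hf,
    Real.norm_eq_abs]

lemma setIntegral_abs_le_two_mul_of_abs_setIntegral_le {α : Type*} [MeasurableSpace α]
    {μ : Measure α} {f : α → ℝ} (hf : Integrable f μ) {A : Set α} (hA : MeasurableSet A) {ε : ℝ}
    (h : ∀ B ⊆ A, MeasurableSet B → |∫ x in B, f x ∂μ| ≤ ε) : ∫ x in A, |f x| ∂μ ≤ 2 * ε := by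
  set g := hf.1.mk f
  have hfg : f =ᵐ[μ] g := hf.1.ae_eq_mk
  have hg : StronglyMeasurable g := hf.1.stronglyMeasurable_mk
  have hgB : ∀ B ⊆ A, MeasurableSet B → |∫ x in B, g x ∂μ| ≤ ε := fun B hBA hB => by
    rw [← integral_congr_ae (ae_restrict_of_ae hfg)]
    exact h B hBA hB
  have hP : MeasurableSet {x | 0 ≤ g x} := measurableSet_le measurable_const hg.measurable
  have hN : MeasurableSet {x | g x ≤ 0} := measurableSet_le hg.measurable measurable_const
  have hpos := abs_le.1 <| hgB _ Set.inter_subset_right (hP.inter hA)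
  have hneg := abs_le.1 <| hgB _ Set.inter_subset_right (hN.inter hA)
  have hsplit := integral_norm_eq_pos_sub_neg ((hf.congr hfg).restrict (s := A))
  rw [Measure.restrict_restrict hP, Measure.restrict_restrict hN] at hsplit
  have habs : ∫ x in A, |f x| ∂μ = ∫ x in A, |g x| ∂μ :=
    integral_congr_ae (ae_restrict_of_ae (hfg.mono fun x hx => congrArg abs hx))
  simp only [Real.norm_eq_abs] at hsplit
  rw [habs, hsplit]
  linarith [hpos.1, hpos.2, hneg.1, hneg.2]

/-- The indicator functions in `L¹(η)`. With the `L¹` distance they form a complete metric space,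
isometric to the measure algebra of `η`: `dist 1_A 1_B = η (A ∆ B)`. -/
def indicatorsL1 (η : Measure Ω) : Set (Lp ℝ 1 η) := {f | ∀ᵐ ω ∂η, f ω ∈ ({0, 1} : Set ℝ)}

section IndicatorsL1

variable {η : Measure Ω}

lemma isClosed_indicatorsL1 : IsClosed (indicatorsL1 η) :=
  Lp.isClosed_setOf_ae_mem (Set.toFinite _).isClosed

lemma measurableSet_setOf_coeFn_eq_one (f : Lp ℝ 1 η) : MeasurableSet {ω | f ω = 1} :=
  (Lp.stronglyMeasurable f).measurable (measurableSet_singleton 1)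

lemma indicatorConstLp_one_mem_indicatorsL1 {A : Set Ω} (hA : MeasurableSet A) (hηA : η A ≠ ∞) :
    indicatorConstLp 1 hA hηA (1 : ℝ) ∈ indicatorsL1 η := by
  filter_upwards [indicatorConstLp_coeFn (p := 1) (hs := hA) (hμs := hηA) (c := (1 : ℝ))]
    with ω h
  by_cases hω : ω ∈ A <;> simp [h, hω]

lemma setOf_indicatorConstLp_eq_one_ae_eq {A : Set Ω} (hA : MeasurableSet A) (hηA : η A ≠ ∞) :
    {ω | indicatorConstLp 1 hA hηA (1 : ℝ) ω = 1} =ᵐ[η] A := by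
  filter_upwards [indicatorConstLp_coeFn (p := 1) (hs := hA) (hμs := hηA) (c := (1 : ℝ))]
    with ω h
  change (_ = (1 : ℝ)) = (ω ∈ A)
  by_cases hω : ω ∈ A <;> simp [h, hω]

lemma dist_indicatorConstLp_one {A B : Set Ω} (hA : MeasurableSet A) (hηA : η A ≠ ∞)
    (hB : MeasurableSet B) (hηB : η B ≠ ∞) :
    dist (indicatorConstLp 1 hA hηA (1 : ℝ)) (indicatorConstLp 1 hB hηB (1 : ℝ)) =
      η.real (A ∆ B) := by
  simp [dist_indicatorConstLp_eq_norm, norm_indicatorConstLp one_ne_zero ENNReal.one_ne_top]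

variable [IsFiniteMeasure η]

lemma indicatorConstLp_setOf_eq_one {f : Lp ℝ 1 η} (hf : f ∈ indicatorsL1 η) :
    indicatorConstLp 1 (measurableSet_setOf_coeFn_eq_one f) (measure_ne_top η _) (1 : ℝ) = f := by
  refine Lp.ext (indicatorConstLp_coeFn.trans ?_)
  filter_upwards [hf] with ω hω
  rcases hω with h | h <;> simp_all

lemma dist_eq_measureReal_symmDiff {f g : Lp ℝ 1 η} (hf : f ∈ indicatorsL1 η)
    (hg : g ∈ indicatorsL1 η) : dist f g = η.real ({ω | f ω = 1} ∆ {ω | g ω = 1}) := by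
  rw [← dist_indicatorConstLp_one (measurableSet_setOf_coeFn_eq_one f) (measure_ne_top η _)
    (measurableSet_setOf_coeFn_eq_one g) (measure_ne_top η _), indicatorConstLp_setOf_eq_one hf,
    indicatorConstLp_setOf_eq_one hg]

lemma continuousOn_setIntegral_setOf_eq_one {h : Ω → ℝ} (hh : Integrable h η) :
    ContinuousOn (fun f : Lp ℝ 1 η => ∫ ω in {ω | f ω = 1}, h ω ∂η) (indicatorsL1 η) := by
  intro g hg
  set T : Lp ℝ 1 η → Set Ω := fun f => {ω | f ω = 1}
  have hΔ : Tendsto (fun f => η (T f ∆ T g)) (𝓝[indicatorsL1 η] g) (𝓝 0) := by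
    have hdist : Tendsto (fun f => ENNReal.ofReal (dist f g)) (𝓝[indicatorsL1 η] g) (𝓝 0) := by
      simpa using ENNReal.tendsto_ofReal
        (tendsto_iff_dist_tendsto_zero.1 (tendsto_id.mono_left nhdsWithin_le_nhds))
    refine hdist.congr' (eventually_nhdsWithin_of_forall fun f hf => ?_)
    rw [dist_eq_measureReal_symmDiff hf hg, measureReal_def,
      ENNReal.ofReal_toReal (measure_ne_top η _)]
  have hsmall : ∀ s : Lp ℝ 1 η → Set Ω, (∀ f, s f ⊆ T f ∆ T g) →
      Tendsto (fun f => ∫ ω in s f, h ω ∂η) (𝓝[indicatorsL1 η] g) (𝓝 0) := fun s hs =>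
    hh.tendsto_setIntegral_nhds_zero (tendsto_of_tendsto_of_tendsto_of_le_of_le
      tendsto_const_nhds hΔ (fun _ => bot_le) fun f => measure_mono (hs f))
  have hsplit : ∀ f, ∫ ω in T f, h ω ∂η =
      ∫ ω in T g, h ω ∂η + ∫ ω in T f \ T g, h ω ∂η - ∫ ω in T g \ T f, h ω ∂η := fun f => by
    rw [← integral_inter_add_sdiff (measurableSet_setOf_coeFn_eq_one g) hh.integrableOn,
      ← integral_inter_add_sdiff (measurableSet_setOf_coeFn_eq_one f) (s := T g) hh.integrableOn,
      Set.inter_comm]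
    ring
  have hlim := (tendsto_const_nhds (x := ∫ ω in T g, h ω ∂η)).add
    (hsmall _ fun f => Set.subset_union_left) |>.sub (hsmall _ fun f => Set.subset_union_right)
  rw [add_zero, sub_zero] at hlim
  exact hlim.congr fun f => (hsplit f).symm

end IndicatorsL1

section VitaliHahnSaks

variable {η : Measure Ω} [IsFiniteMeasure η]

/-- `∫_A h` is the difference of the values at `1_{A₀ ∪ A}` and `1_{A₀ \ A}`, both of which lie
within `η A` of `f₀ = 1_{A₀}`. -/
lemma abs_setIntegral_le_two_mul_of_ball {h : Ω → ℝ} (hh : Integrable h η) {f₀ : Lp ℝ 1 η}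
    (hf₀ : f₀ ∈ indicatorsL1 η) {r e : ℝ}
    (hball : ∀ f ∈ indicatorsL1 η, dist f f₀ < r → |∫ ω in {ω | f ω = 1}, h ω ∂η| ≤ e)
    {A : Set Ω} (hA : MeasurableSet A) (hηA : η.real A < r) : |∫ ω in A, h ω ∂η| ≤ 2 * e := by
  set A₀ := {ω | f₀ ω = 1}
  have hA₀ : MeasurableSet A₀ := measurableSet_setOf_coeFn_eq_one f₀
  have hnear : ∀ B (hB : MeasurableSet B), B ∆ A₀ ⊆ A → |∫ ω in B, h ω ∂η| ≤ e := by
    intro B hB hBA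
    have hdist : dist (indicatorConstLp 1 hB (measure_ne_top η B) (1 : ℝ)) f₀ < r := by
      rw [← indicatorConstLp_setOf_eq_one hf₀, dist_indicatorConstLp_one]
      exact (measureReal_mono hBA).trans_lt hηA
    have := hball _ (indicatorConstLp_one_mem_indicatorsL1 hB _) hdist
    rwa [setIntegral_congr_set (setOf_indicatorConstLp_eq_one_ae_eq hB _)] at this
  have h₁ := hnear (A₀ ∪ A) (hA₀.union hA) fun ω => by simp [Set.mem_symmDiff]; tauto
  have h₂ := hnear (A₀ \ A) (hA₀.diff hA) fun ω => by simp [Set.mem_symmDiff]; tauto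
  have hsplit : ∫ ω in A, h ω ∂η = ∫ ω in A₀ ∪ A, h ω ∂η - ∫ ω in A₀ \ A, h ω ∂η := by
    rw [← Set.sdiff_union_self, setIntegral_union disjoint_sdiff_self_left hA hh.integrableOn
      hh.integrableOn]
    ring
  rw [hsplit, abs_le]
  rw [abs_le] at h₁ h₂
  constructor <;> linarith

lemma exists_forall_abs_setIntegral_le {ξ : ℕ → Ω → ℝ} (hξ : ∀ n, Integrable (ξ n) η)
    (hcauchy : ∀ A, MeasurableSet A → CauchySeq fun n => ∫ ω in A, ξ n ω ∂η) {ε : ℝ}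
    (hε : 0 < ε) :
    ∃ δ > 0, ∀ n A, MeasurableSet A → η A ≤ ENNReal.ofReal δ → |∫ ω in A, ξ n ω ∂η| ≤ ε := by
  have : Nonempty (indicatorsL1 η) :=
    ⟨⟨_, indicatorConstLp_one_mem_indicatorsL1 MeasurableSet.empty (measure_ne_top η ∅)⟩⟩
  have : CompleteSpace (indicatorsL1 η) := isClosed_indicatorsL1.completeSpace_coe
  obtain ⟨N, U, hU, ⟨f₀, hf₀⟩, hUN⟩ := exists_isOpen_forall_dist_le_of_cauchySeq
    (φ := fun n (f : indicatorsL1 η) => ∫ ω in {ω | (f : Lp ℝ 1 η) ω = 1}, ξ n ω ∂η)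
    (fun n => (continuousOn_setIntegral_setOf_eq_one (hξ n)).domRestrict)
    (fun f => hcauchy _ (measurableSet_setOf_coeFn_eq_one (f : Lp ℝ 1 η))) (e := ε / 3)
    (by positivity)
  obtain ⟨r, hr, hball⟩ := Metric.isOpen_iff.1 hU f₀ hf₀
  obtain ⟨δ, hδ, hfin⟩ := unifIntegrable_finite (ι := Fin (N + 1)) le_rfl ENNReal.one_ne_top
    (f := fun i => ξ i) (fun i => memLp_one_iff_integrable.2 (hξ i)) (ε := ε / 3) (by positivity)
  refine ⟨min δ (r / 2), by positivity, fun n A hA hηA => ?_⟩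
  have hle_N : ∀ m ≤ N, |∫ ω in A, ξ m ω ∂η| ≤ ε / 3 := by
    intro m hm
    have := hfin ⟨m, Nat.lt_succ_of_le hm⟩ A hA
      (hηA.trans (ENNReal.ofReal_le_ofReal (min_le_left _ _)))
    rw [eLpNorm_indicator_eq_eLpNorm_restrict hA,
      eLpNorm_one_eq_ofReal_integral_abs (hξ m).restrict,
      ENNReal.ofReal_le_ofReal_iff (by positivity)] at this
    exact abs_integral_le_integral_abs.trans this
  rcases le_or_gt n N with hn | hn
  · exact (hle_N n hn).trans (by linarith)
  have hηA' : η.real A < r := by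
    refine (ENNReal.toReal_le_of_le_ofReal (by positivity) ?_).trans_lt (half_lt_self hr)
    exact hηA.trans (ENNReal.ofReal_le_ofReal (min_le_right _ _))
  have hdiff : |∫ ω in A, (ξ n ω - ξ N ω) ∂η| ≤ 2 * (ε / 3) := by
    refine abs_setIntegral_le_two_mul_of_ball ((hξ n).sub (hξ N)) f₀.2 (fun f hf hdist => ?_)
      hA hηA'
    have := hUN ⟨f, hf⟩ (hball hdist) n hn.le
    rwa [Real.dist_eq, ← integral_sub (hξ n).integrableOn (hξ N).integrableOn] at this
  rw [integral_sub (hξ n).integrableOn (hξ N).integrableOn] at hdiff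
  have hN := hle_N N le_rfl
  rw [abs_le] at hdiff hN ⊢
  constructor <;> linarith

theorem unifIntegrable_of_cauchySeq_setIntegral {ξ : ℕ → Ω → ℝ} (hξ : ∀ n, Integrable (ξ n) η)
    (hcauchy : ∀ A, MeasurableSet A → CauchySeq fun n => ∫ ω in A, ξ n ω ∂η) :
    UnifIntegrable ξ 1 η := by
  intro ε hε
  obtain ⟨δ, hδ, hsmall⟩ := exists_forall_abs_setIntegral_le hξ hcauchy (half_pos hε)
  refine ⟨δ, hδ, fun n A hA hηA => ?_⟩
  rw [eLpNorm_indicator_eq_eLpNorm_restrict hA, eLpNorm_one_eq_ofReal_integral_abs (hξ n).restrict]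
  refine ENNReal.ofReal_le_ofReal ((setIntegral_abs_le_two_mul_of_abs_setIntegral_le (hξ n) hA
    fun B hBA hB => hsmall n B hB ((measure_mono hBA).trans hηA)).trans (by linarith))

end VitaliHahnSaks

section AeLimit

variable {η : Measure Ω} [IsFiniteMeasure η] {ξ : ℕ → Ω → ℝ} {g : Ω → ℝ}

lemma measure_setOf_le_eq_zero_of_tendsto_setIntegral (hξm : ∀ n, StronglyMeasurable (ξ n))
    (hξ : ∀ n, Integrable (ξ n) η) (hg : StronglyMeasurable g)
    (hset : ∀ A, MeasurableSet A → Tendsto (fun n => ∫ ω in A, ξ n ω ∂η) atTop (𝓝 0))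
    (hlim : ∀ᵐ ω ∂η, Tendsto (fun n => ξ n ω) atTop (𝓝 (g ω))) {c : ℝ} (hc : 0 < c) :
    η {ω | c ≤ g ω} = 0 := by
  refine le_antisymm (ENNReal.le_of_forall_pos_le_add fun ε hε _ => ?_) bot_le
  obtain ⟨t, ht, hηt, hunif⟩ := tendstoUniformlyOn_of_ae_tendsto' hξm hg hlim (NNReal.coe_pos.2 hε)
  set A := {ω | c ≤ g ω} \ t
  have hA : MeasurableSet A := (measurableSet_le measurable_const hg.measurable).diff ht
  have hev : ∀ᶠ n in atTop, c / 2 * η.real A ≤ ∫ ω in A, ξ n ω ∂η := by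
    filter_upwards [Metric.tendstoUniformlyOn_iff.1 hunif (c / 2) (half_pos hc)] with n hn
    refine setIntegral_ge_of_const_le_real hA (measure_ne_top η A) (fun ω hω => ?_)
      (hξ n).integrableOn
    have hcg : c ≤ g ω := hω.1
    have := (abs_lt.1 (Real.dist_eq _ _ ▸ hn ω hω.2)).2
    linarith
  have hηA : η A = 0 := by
    have := ge_of_tendsto (hset A hA) hev
    rw [← measureReal_eq_zero_iff]
    nlinarith [measureReal_nonneg (μ := η) (s := A)]
  have hcover : {ω | c ≤ g ω} ⊆ A ∪ t := by
    rw [Set.sdiff_union_self]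
    exact Set.subset_union_left
  calc η {ω | c ≤ g ω} ≤ η (A ∪ t) := measure_mono hcover
    _ ≤ η A + η t := measure_union_le _ _
    _ ≤ 0 + ε := by rw [hηA]; simpa using hηt

lemma ae_le_zero_of_tendsto_setIntegral (hξm : ∀ n, StronglyMeasurable (ξ n))
    (hξ : ∀ n, Integrable (ξ n) η) (hg : StronglyMeasurable g)
    (hset : ∀ A, MeasurableSet A → Tendsto (fun n => ∫ ω in A, ξ n ω ∂η) atTop (𝓝 0))
    (hlim : ∀ᵐ ω ∂η, Tendsto (fun n => ξ n ω) atTop (𝓝 (g ω))) : ∀ᵐ ω ∂η, g ω ≤ 0 := by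
  have hlt : ∀ᵐ ω ∂η, ∀ k : ℕ, g ω < 1 / (k + 1) := ae_all_iff.2 fun k => by
    rw [ae_iff]
    simpa only [not_lt] using
      measure_setOf_le_eq_zero_of_tendsto_setIntegral hξm hξ hg hset hlim Nat.one_div_pos_of_nat
  filter_upwards [hlt] with ω hω
  exact ge_of_tendsto' tendsto_one_div_add_atTop_nhds_zero_nat fun k => (hω k).le

theorem ae_eq_zero_of_tendsto_setIntegral (hξ : ∀ n, Integrable (ξ n) η)
    (hset : ∀ A, MeasurableSet A → Tendsto (fun n => ∫ ω in A, ξ n ω ∂η) atTop (𝓝 0))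
    (hlim : ∀ᵐ ω ∂η, Tendsto (fun n => ξ n ω) atTop (𝓝 (g ω))) : g =ᵐ[η] 0 := by
  set ξ' := fun n => (hξ n).1.mk (ξ n)
  have hξm' : ∀ n, StronglyMeasurable (ξ' n) := fun n => (hξ n).1.stronglyMeasurable_mk
  have hξ' : ∀ n, Integrable (ξ' n) η := fun n => (hξ n).congr (hξ n).1.ae_eq_mk
  have hgm : AEStronglyMeasurable g η :=
    aestronglyMeasurable_of_tendsto_ae _ (fun n => (hξ n).1) hlim
  have hset' : ∀ A, MeasurableSet A → Tendsto (fun n => ∫ ω in A, ξ' n ω ∂η) atTop (𝓝 0) :=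
    fun A hA => (hset A hA).congr fun n => integral_congr_ae (ae_restrict_of_ae (hξ n).1.ae_eq_mk)
  have hlim' : ∀ᵐ ω ∂η, Tendsto (fun n => ξ' n ω) atTop (𝓝 (hgm.mk g ω)) := by
    filter_upwards [hlim, ae_all_iff.2 fun n => (hξ n).1.ae_eq_mk, hgm.ae_eq_mk] with ω hω hξω hgω
    rw [← hgω]
    exact hω.congr hξω
  have hle := ae_le_zero_of_tendsto_setIntegral hξm' hξ' hgm.stronglyMeasurable_mk hset' hlim'
  have hge := ae_le_zero_of_tendsto_setIntegral (fun n => (hξm' n).neg) (fun n => (hξ' n).neg)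
    hgm.stronglyMeasurable_mk.neg (fun A hA => by simpa [integral_neg] using (hset' A hA).neg)
    (hlim'.mono fun ω hω => hω.neg)
  filter_upwards [hgm.ae_eq_mk, hle, hge] with ω hgω hω₁ hω₂
  simp only [Pi.neg_apply, neg_nonpos] at hω₂
  rw [hgω, Pi.zero_apply]
  exact le_antisymm hω₁ hω₂

end AeLimit

/-- if `{ξₙ} ⊆ L¹(η)` is weakly null and converges a.e. to `g₀`, then `g₀ = 0`
a.e. and `ξₙ → 0` in the norm of `L¹(η)`. -/
theorem statement11
    {Ω : Type*} [MeasurableSpace Ω] (η : Measure Ω) [IsFiniteMeasure η]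
    (ξ : ℕ → Ω → ℝ) (hξ : ∀ n, Integrable (ξ n) η)
    (hwn : ∀ g : Ω → ℝ, Measurable g → (∃ C : ℝ, ∀ ω, |g ω| ≤ C) →
      Tendsto (fun n => ∫ ω, ξ n ω * g ω ∂η) atTop (nhds 0))
    (g₀ : Ω → ℝ)
    (hae : ∀ᵐ ω ∂η, Tendsto (fun n => ξ n ω) atTop (nhds (g₀ ω))) :
    g₀ =ᵐ[η] 0 ∧ Tendsto (fun n => ∫ ω, |ξ n ω| ∂η) atTop (nhds 0) := by
  have hset : ∀ A, MeasurableSet A → Tendsto (fun n => ∫ ω in A, ξ n ω ∂η) atTop (𝓝 0) := by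
    intro A hA
    have hbdd : ∀ ω, |A.indicator 1 ω| ≤ (1 : ℝ) := fun ω => by
      by_cases hω : ω ∈ A <;> simp [hω]
    refine (hwn _ (measurable_one.indicator hA) ⟨1, hbdd⟩).congr fun n => ?_
    rw [← integral_indicator hA]
    congr 1 with ω
    by_cases hω : ω ∈ A <;> simp [hω]
  have hg₀ : g₀ =ᵐ[η] 0 := ae_eq_zero_of_tendsto_setIntegral hξ hset hae
  have hae₀ : ∀ᵐ ω ∂η, Tendsto (fun n => ξ n ω) atTop (𝓝 0) := by
    filter_upwards [hae, hg₀] with ω hω hω₀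
    rwa [hω₀] at hω
  have hui : UnifIntegrable ξ 1 η :=
    unifIntegrable_of_cauchySeq_setIntegral hξ fun A hA => (hset A hA).cauchySeq
  have hL1 : Tendsto (fun n => eLpNorm (ξ n - 0) 1 η) atTop (𝓝 0) :=
    tendsto_Lp_finite_of_tendsto_ae le_rfl ENNReal.one_ne_top (fun n => (hξ n).1) MemLp.zero hui
      hae₀
  refine ⟨hg₀, ?_⟩
  refine ((ENNReal.tendsto_toReal ENNReal.zero_ne_top).comp hL1).congr fun n => ?_
  rw [Function.comp_apply, sub_zero, eLpNorm_one_eq_ofReal_integral_abs (hξ n),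
    ENNReal.toReal_ofReal (integral_nonneg fun ω => abs_nonneg (ξ n ω))]

end Paper
end
end

section
/- Let (Ω,Σ,μ) be a finite measure space such that the pseudometric space (Σ, d_μ), d_μ(A,B) := μ(A △ B), is separable. Let X be a Banach space and m : Σ → X a σ-additive vector measure such that m(B) = 0 for every B ∈ Σ with μ(B) = 0. Then the pseudometric space (Σ, d_m), d_m(A,B) := ‖m‖(A △ B), is separable; that is, m is a separable vector measure. -/
/-!
If `m` vanishes on `μ`-null sets, then `‖m E‖` is uniformly small on sets of small `μ`-measure:
otherwise there are sets `E n` with `μ (E n) < 2⁻ⁿ` and `‖m (E n)‖ > ε`; their `limsup` is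
`μ`-null, and removing it leaves a decreasing sequence of tails with empty intersection on whose
subsets `m` would stay large, which a disjointification turns into a contradiction with the
σ-additivity of `m`. Since the semivariation of a set is at most twice the supremum of `‖m t‖`
over its subsets, a countable `d_μ`-dense family of sets is then `d_m`-dense as well.
-/

open MeasureTheory Filter Topology
open scoped ENNReal

noncomputable section

namespace Paper

variable {Ω : Type*} [MeasurableSpace Ω]
variable {X : Type*} [NormedAddCommGroup X] [NormedSpace ℝ X]

variable {S : Type*} [MeasurableSpace S] {μ : Measure S}

section

variable {V : Type*} [NormedAddCommGroup V]

lemma exists_forall_subset_norm_le_of_iInter_eq_empty (v : VectorMeasure Ω V)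
    {s : ℕ → Set Ω} (hs : ∀ n, MeasurableSet (s n)) (hanti : Antitone s)
    (hempty : ⋂ n, s n = ∅) {ε : ℝ} (hε : 0 < ε) :
    ∃ n, ∀ t ⊆ s n, MeasurableSet t → ‖v t‖ ≤ ε := by
  by_contra! hbig
  choose F hFs hFm hFε using hbig
  have hnext : ∀ n, ∃ k, n < k ∧ ‖v (F n ∩ s k)‖ < ε / 2 := by
    intro n
    have hlim : Tendsto (fun k => v (F n ∩ s k)) atTop (𝓝 0) := by
      have := VectorMeasure.tendsto_vectorMeasure_iInter_atTop_nat (v := v)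
        (fun _ _ hkl => Set.inter_subset_inter_right _ (hanti hkl)) fun k => (hFm n).inter (hs k)
      rwa [← Set.inter_iInter, hempty, Set.inter_empty, VectorMeasure.empty] at this
    have hsmall := (NormedAddGroup.tendsto_nhds_zero.1 hlim) (ε / 2) (half_pos hε)
    exact ((eventually_gt_atTop n).and hsmall).exists
  choose next hnext_gt hnext_small using hnext
  -- Along `ν`, the part of `F (ν j)` left after removing `s (ν (j + 1))` is disjoint from all
  -- later `F (ν i) ⊆ s (ν i)`, and still has `‖v‖ > ε / 2`.
  set ν : ℕ → ℕ := fun j => next^[j] 0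
  have hν_succ : ∀ j, ν (j + 1) = next (ν j) := fun j => Function.iterate_succ_apply' next j 0
  have hν : StrictMono ν := strictMono_nat_of_lt_succ fun j => hν_succ j ▸ hnext_gt (ν j)
  set G : ℕ → Set Ω := fun j => F (ν j) \ s (ν (j + 1))
  have hGm : ∀ j, MeasurableSet (G j) := fun j => (hFm _).diff (hs _)
  have hG_disj : Pairwise (Function.onFun Disjoint G) := by
    refine (pairwise_disjoint_on G).2 fun i j hij => Set.disjoint_left.2 fun x hxi hxj => hxi.2 ?_
    exact hanti (hν.monotone (Nat.succ_le_of_lt hij)) (hFs _ hxj.1)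
  have hG_big : ∀ j, ε / 2 < ‖v (G j)‖ := by
    intro j
    have hsplit : v (F (ν j)) = v (G j) + v (F (ν j) ∩ s (ν (j + 1))) := by
      rw [← VectorMeasure.of_union Set.disjoint_sdiff_inter (hGm j) ((hFm _).inter (hs _)),
        Set.sdiff_union_inter]
    have hsum : ε < ‖v (G j)‖ + ‖v (F (ν j) ∩ s (ν (j + 1)))‖ :=
      (hFε _).trans_le (hsplit ▸ norm_add_le _ _)
    have hsmall := hν_succ j ▸ hnext_small (ν j)
    linarith
  have hG_lim : Tendsto (fun j => v (G j)) atTop (𝓝 0) :=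
    (v.m_iUnion hGm hG_disj).summable.tendsto_atTop_zero
  obtain ⟨j, hj⟩ :=
    ((NormedAddGroup.tendsto_nhds_zero.1 hG_lim) (ε / 2) (half_pos hε)).exists
  exact (hG_big j).not_ge hj.le

lemma exists_pos_forall_measure_lt_norm_le (μ : Measure Ω) (v : VectorMeasure Ω V)
    (hv : ∀ s, MeasurableSet s → μ s = 0 → v s = 0) {ε : ℝ} (hε : 0 < ε) :
    ∃ δ : ℝ, 0 < δ ∧ ∀ s, MeasurableSet s → μ s < ENNReal.ofReal δ → ‖v s‖ ≤ ε := by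
  by_contra! hbig
  choose E hEm hEμ hEε using fun n : ℕ => hbig ((2⁻¹ : ℝ) ^ n) (by positivity)
  set L := limsup E atTop
  have hL : μ L = 0 := by
    refine measure_limsup_atTop_eq_zero (ne_top_of_le_ne_top ?_
      (ENNReal.tsum_le_tsum fun n => (hEμ n).le))
    rw [← ENNReal.ofReal_tsum_of_nonneg (fun n => by positivity)
      (summable_geometric_of_lt_one (by norm_num) (by norm_num))]
    exact ENNReal.ofReal_ne_top
  have hL_eq : L = ⋂ n, ⋃ k ≥ n, E k := limsup_eq_iInf_iSup_of_nat
  have hLm : MeasurableSet L :=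
    hL_eq ▸ .iInter fun n => .biUnion (Set.to_countable _) fun k _ => hEm k
  have hvE : ∀ n, v (E n \ L) = v (E n) := by
    intro n
    rw [← Set.sdiff_self_inter,
      VectorMeasure.of_sdiff ((hEm n).inter hLm) (hEm n) Set.inter_subset_left,
      hv _ ((hEm n).inter hLm) (measure_mono_null Set.inter_subset_right hL), sub_zero]
  obtain ⟨n, hn⟩ := exists_forall_subset_norm_le_of_iInter_eq_empty v
    (s := fun n => (⋃ k ≥ n, E k) \ L)
    (fun n => (MeasurableSet.biUnion (Set.to_countable _) fun k _ => hEm k).diff hLm)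
    (fun a b hab => Set.sdiff_subset_sdiff_left (Set.biUnion_mono (fun k hk => hab.trans hk)
      fun _ _ => le_rfl))
    (Set.eq_empty_of_forall_notMem fun x hx => (Set.mem_iInter.1 hx 0).2 <| by
      rw [hL_eq]; exact Set.mem_iInter.2 fun n => (Set.mem_iInter.1 hx n).1) hε
  have hEL : E n \ L ⊆ (⋃ k ≥ n, E k) \ L :=
    Set.sdiff_subset_sdiff_left (Set.subset_iUnion₂ (s := fun k (_ : k ≥ n) => E k) n le_rfl)
  exact (hEε n).not_ge (hvE n ▸ hn _ hEL ((hEm n).diff hLm))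

end

lemma semivariation_le_two_mul_of_forall_subset {v : VectorMeasure Ω X} {s : Set Ω}
    (hs : MeasurableSet s) {c : ℝ≥0∞} (h : ∀ t ⊆ s, MeasurableSet t → ‖v t‖ₑ ≤ c) :
    v.semivariation s ≤ 2 * c := by
  refine le_of_forall_lt fun a ha => ?_
  obtain ⟨t, hts, ht, hat⟩ := VectorMeasure.exists_subset_lt_enorm_apply_of_lt_semivariation hs ha
  exact hat.trans_le (by gcongr; exact h t hts ht)

theorem semivar_eq_semivariation (m : VectorMeasure Ω X) :
    semivar m = m.semivariation := by
  ext A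
  simp only [semivar, VectorMeasure.semivariation, SignedMeasure.totalVariation_eq_variation,
    iSup_subtype']
  refine Equiv.iSup_congr (Equiv.subtypeEquivRight fun x => ?_) fun x => rfl
  simp [enorm_eq_nnnorm, ← NNReal.coe_le_one]

theorem statement14_general
    {Ω : Type*} [MeasurableSpace Ω] (μ : Measure Ω)
    {X : Type*} [NormedAddCommGroup X] [NormedSpace ℝ X]
    (hμsep : ∃ D : Set (Set Ω), D.Countable ∧ (∀ B ∈ D, MeasurableSet B) ∧
      ∀ A : Set Ω, MeasurableSet A → ∀ ε : ℝ, 0 < ε →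
        ∃ B ∈ D, μ (symmDiff A B) < ENNReal.ofReal ε)
    (m : VectorMeasure Ω X)
    (hm0 : ∀ B : Set Ω, MeasurableSet B → μ B = 0 → m B = 0) :
    SeparableVM m := by
  obtain ⟨D, hD_count, hD_meas, hD_dense⟩ := hμsep
  refine ⟨D, hD_count, hD_meas, fun A hA ε hε => ?_⟩
  obtain ⟨δ, hδ, hsmall⟩ :=
    exists_pos_forall_measure_lt_norm_le μ m hm0 (ε := ε / 4) (by positivity)
  obtain ⟨B, hBD, hAB⟩ := hD_dense A hA δ hδ
  refine ⟨B, hBD, ?_⟩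
  have hsub : ∀ t ⊆ symmDiff A B, MeasurableSet t → ‖m t‖ₑ ≤ ENNReal.ofReal (ε / 4) :=
    fun t ht htm => by
      rw [← ofReal_norm]
      exact ENNReal.ofReal_le_ofReal (hsmall t htm ((measure_mono ht).trans_lt hAB))
  calc semivar m (symmDiff A B) = m.semivariation (symmDiff A B) := by
        rw [semivar_eq_semivariation]
    _ ≤ 2 * ENNReal.ofReal (ε / 4) :=
        semivariation_le_two_mul_of_forall_subset (hA.symmDiff (hD_meas B hBD)) hsub
    _ = ENNReal.ofReal (ε / 2) := by
        rw [← ENNReal.ofReal_ofNat 2, ← ENNReal.ofReal_mul zero_le_two]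
        ring_nf
    _ < ENNReal.ofReal ε := (ENNReal.ofReal_lt_ofReal_iff hε).2 (by linarith)

/-- if `(Σ, d_μ)` is separable and the σ-additive vector measure `m` vanishes
on `μ`-null sets, then `m` is a separable vector measure. -/
theorem statement14
    {Ω : Type*} [MeasurableSpace Ω] (μ : Measure Ω) [IsFiniteMeasure μ]
    {X : Type*} [NormedAddCommGroup X] [NormedSpace ℝ X]
    (hμsep : ∃ D : Set (Set Ω), D.Countable ∧ (∀ B ∈ D, MeasurableSet B) ∧
      ∀ A : Set Ω, MeasurableSet A → ∀ ε : ℝ, 0 < ε →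
        ∃ B ∈ D, μ (symmDiff A B) < ENNReal.ofReal ε)
    (m : VectorMeasure Ω X)
    (hm0 : ∀ B : Set Ω, MeasurableSet B → μ B = 0 → m B = 0) :
    SeparableVM m :=
  statement14_general μ hμsep m hm0

end Paper
end
end
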